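/- Let n ≥ 1 and let I be a nonzero saturated monomial ideal of ℂ[x_0,…,x_n]. Then the set {a ∈ ℤ_{≥0}^{n+1} : x^a ∉ I} of exponent vectors of monomials not in I is a finite (possibly empty) union of k-orthants with 1 ≤ k ≤ n. -/

import Mathlib

open MvPolynomial

/-- The Hilbert function of an ideal `I ⊆ ℂ[x_0,…,x_{n-1}]`: the dimension over `ℂ` of the
degree-`d` graded piece of the quotient ring. -/
noncomputable def hilbertFn (n : ℕ) (I : Ideal (MvPolynomial (Fin n) ℂ)) (d : ℕ) : ℕ :=
  Module.finrank ℂ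
    ((homogeneousSubmodule (Fin n) ℂ d) ⧸
      (Submodule.comap (homogeneousSubmodule (Fin n) ℂ d).subtype
        (Submodule.restrictScalars ℂ I)))

/-- A monomial ideal: an ideal generated by monomials. -/
def IsMonomialIdeal {n : ℕ} (I : Ideal (MvPolynomial (Fin n) ℂ)) : Prop :=
  ∃ S : Set (Fin n →₀ ℕ), I = Ideal.span ((fun a => monomial a (1 : ℂ)) '' S)

/-- A homogeneous ideal `I` is saturated if for every homogeneous `f`, whenever `x_i * f ∈ I`
for all variables `x_i`, one has `f ∈ I`. -/
def IsSaturatedIdeal {n : ℕ} (I : Ideal (MvPolynomial (Fin n) ℂ)) : Prop :=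
  ∀ f : MvPolynomial (Fin n) ℂ, (∃ d, f.IsHomogeneous d) →
    (∀ i : Fin n, X i * f ∈ I) → f ∈ I

/-- `I` has Hilbert polynomial `p` if its Hilbert function agrees with `p` for all
sufficiently large degrees. -/
def HasHilbertPoly {n : ℕ} (I : Ideal (MvPolynomial (Fin n) ℂ)) (p : Polynomial ℚ) : Prop :=
  ∃ N : ℕ, ∀ d : ℕ, N ≤ d → (hilbertFn n I d : ℚ) = p.eval (d : ℚ)

/-- `I`'s Hilbert function eventually agrees with the function `p`. -/
def HasHilbertFun {n : ℕ} (I : Ideal (MvPolynomial (Fin n) ℂ)) (p : ℕ → ℕ) : Prop :=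
  ∃ N : ℕ, ∀ d : ℕ, N ≤ d → hilbertFn n I d = p d

/-- The value at `d` of the Hilbert polynomial `p_λ` attached to a partition
`λ = (λ_1, …, λ_r)` (given as a list): `p_λ(d) = Σ_{i=1}^r C(d + λ_i − i, λ_i − 1)`.
(For `d ≥ r` the truncated subtraction agrees with the true polynomial value.) -/
def partitionPoly (L : List ℕ) (d : ℕ) : ℕ :=
  ∑ i : Fin L.length, Nat.choose (d + L.get i - (i.val + 1)) (L.get i - 1)

/-- A `k`-orthant in `ℤ_{≥0}^m`: the set of lattice points with `m − k` coordinates fixed. -/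
def IsOrthant (m k : ℕ) (K : Set (Fin m →₀ ℕ)) : Prop :=
  ∃ (S : Finset (Fin m)) (c : Fin m → ℕ), S.card = m - k ∧
    K = {a : Fin m →₀ ℕ | ∀ i ∈ S, a i = c i}

attribute [local instance] MvPolynomial.gradedAlgebra

/-- A homogeneous ideal. -/
def IsHomogeneousIdeal {n : ℕ} (I : Ideal (MvPolynomial (Fin n) ℂ)) : Prop :=
  Ideal.IsHomogeneous (homogeneousSubmodule (Fin n) ℂ) I

/-!
By Dickson's lemma the exponents of the monomials outside `I` form the complement of the upper
closure of a finite nonempty set `G`, and saturation says that from each such exponent one can step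
up in some coordinate without entering `I`. Let `a` be outside `I` and `N` bound the entries of
the generators. The coordinates where `a` lies below some generator cut out an orthant avoiding
`I`. If these are all coordinates, then `a ≤ N`, and climbing `(n + 1) N + 1` steps from `a`
raises one coordinate by at least `N`, so the whole line through `a` in that direction avoids `I`.
Hence every such `a` lies in an orthant of dimension between `1` and `n` avoiding `I` whose fixed
coordinates are at most `N`, and there are only finitely many of those.
-/

open Finset Finsupp

theorem exists_finset_upperClosure_eq {α : Type*} [PartialOrder α] [WellQuasiOrderedLE α]
    (S : Set α) : ∃ G : Finset α, upperClosure (G : Set α) = upperClosure S := by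
  have hfin : {x | Minimal (· ∈ S) x}.Finite :=
    (setOfPred_minimal_antichain _).finite_of_partiallyWellOrderedOn
      ((Set.isPWO_of_wellQuasiOrderedLE S).mono (setOfPred_minimal_subset S))
  refine ⟨hfin.toFinset, le_antisymm ?_ ?_⟩
  · intro a ha
    obtain ⟨s, hs, hsa⟩ := mem_upperClosure.1 ha
    obtain ⟨m, hms, hm⟩ := (Set.isPWO_of_wellQuasiOrderedLE S).exists_le_minimal hs
    exact mem_upperClosure.2 ⟨m, hfin.mem_toFinset.2 hm, hms.trans hsa⟩
  · exact upperClosure_anti fun x hx => (hfin.mem_toFinset.1 hx).prop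

section Orthant

variable {ι : Type*}

def orthant (S : Finset ι) (c : ι → ℕ) : Set (ι →₀ ℕ) := {b | ∀ j ∈ S, b j = c j}

theorem exists_finset_orthant_cover [Fintype ι] (P : Set (ι →₀ ℕ)) (Q : Finset ι → Prop) (N : ℕ)
    (h : ∀ a ∈ P, ∃ S, Q S ∧ (∀ j ∈ S, a j ≤ N) ∧ orthant S a ⊆ P) :
    ∃ 𝒞 : Finset (Set (ι →₀ ℕ)), (∀ K ∈ 𝒞, ∃ S c, Q S ∧ K = orthant S c) ∧ P = ⋃₀ ↑𝒞 := by
  classical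
  let F : Finset ι × (ι → ℕ) → Set (ι →₀ ℕ) := fun p => orthant p.1 p.2
  refine ⟨((univ ×ˢ Fintype.piFinset fun _ => range (N + 1)).filter
    fun p => Q p.1 ∧ F p ⊆ P).image F, ?_, ?_⟩
  · simp only [mem_image, mem_filter]
    rintro K ⟨p, ⟨-, hQ, -⟩, rfl⟩
    exact ⟨p.1, p.2, hQ, rfl⟩
  refine subset_antisymm (fun a ha => ?_) (Set.sUnion_subset ?_)
  · obtain ⟨S, hQ, haN, hS⟩ := h a ha
    have hF : F (S, fun j => min (a j) N) = orthant S a := by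
      ext b
      exact forall₂_congr fun j hj => by dsimp only; rw [min_eq_left (haN j hj)]
    refine ⟨F (S, fun j => min (a j) N), mem_image_of_mem _ (mem_filter.2 ⟨?_, hQ, hF ▸ hS⟩),
      hF ▸ fun j _ => rfl⟩
    simp [Fintype.mem_piFinset]
  · simp only [coe_image, coe_filter, Set.forall_mem_image]
    exact fun p hp => hp.2.2

theorem isOrthant_orthant {m : ℕ} (S : Finset (Fin m)) (c : Fin m → ℕ) :
    IsOrthant m (m - S.card) (orthant S c) :=
  ⟨S, c, by have := card_le_univ S; rw [Fintype.card_fin] at this; omega, rfl⟩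

theorem exists_le_degree_eq_add {P : Set (ι →₀ ℕ)} (hP : ∀ a ∈ P, ∃ i, a + single i 1 ∈ P)
    {a : ι →₀ ℕ} (ha : a ∈ P) (m : ℕ) : ∃ b ∈ P, a ≤ b ∧ b.degree = a.degree + m := by
  induction m with
  | zero => exact ⟨a, ha, le_rfl, rfl⟩
  | succ m ih =>
    obtain ⟨b, hb, hab, hdeg⟩ := ih
    obtain ⟨i, hi⟩ := hP b hb
    refine ⟨b + single i 1, hi, hab.trans le_self_add, ?_⟩
    rw [map_add, degree_single, hdeg, add_assoc]

variable [Fintype ι] [DecidableEq ι]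

theorem exists_orthant_erase_subset_compl_upperClosure {G : Finset (ι →₀ ℕ)} {N : ℕ}
    (hN : ∀ g ∈ G, ∀ j, g j ≤ N)
    (hsat : ∀ a ∉ upperClosure (G : Set (ι →₀ ℕ)),
      ∃ i, a + single i 1 ∉ upperClosure (G : Set (ι →₀ ℕ)))
    {a : ι →₀ ℕ} (ha : a ∉ upperClosure (G : Set (ι →₀ ℕ))) :
    ∃ i, orthant (univ.erase i) a ⊆ (upperClosure (G : Set (ι →₀ ℕ)) : Set (ι →₀ ℕ))ᶜ := by
  -- climbing `card ι * N + 1` steps inside the complement raises some coordinate by at least `N`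
  obtain ⟨b, hb, hab, hdeg⟩ := exists_le_degree_eq_add hsat ha (Fintype.card ι * N + 1)
  have hsum : ∑ j, (a j + N) < ∑ j, (b j + 1) := by
    simp only [sum_add_distrib, ← degree_eq_sum, hdeg, sum_const, card_univ, smul_eq_mul]
    omega
  obtain ⟨i, -, hi⟩ := exists_lt_of_sum_lt hsum
  refine ⟨i, fun c hc hcG => hb ?_⟩
  obtain ⟨g, hg, hgc⟩ := mem_upperClosure.1 hcG
  refine mem_upperClosure.2 ⟨g, hg, fun j => ?_⟩
  rcases eq_or_ne j i with rfl | hji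
  · exact (hN g hg j).trans (by omega)
  · exact (hgc j).trans ((hc j (mem_erase.2 ⟨hji, mem_univ j⟩)).trans_le (hab j))

theorem exists_orthant_subset_compl_upperClosure (hι : 1 < Fintype.card ι)
    {G : Finset (ι →₀ ℕ)} (hG : G.Nonempty) {N : ℕ} (hN : ∀ g ∈ G, ∀ j, g j ≤ N)
    (hsat : ∀ a ∉ upperClosure (G : Set (ι →₀ ℕ)),
      ∃ i, a + single i 1 ∉ upperClosure (G : Set (ι →₀ ℕ)))
    {a : ι →₀ ℕ} (ha : a ∉ upperClosure (G : Set (ι →₀ ℕ))) :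
    ∃ S : Finset ι, (S.Nonempty ∧ S ≠ univ) ∧ (∀ j ∈ S, a j ≤ N) ∧
      orthant S a ⊆ (upperClosure (G : Set (ι →₀ ℕ)) : Set (ι →₀ ℕ))ᶜ := by
  have hlt : ∀ g ∈ G, ∃ j, a j < g j := by
    simpa [mem_upperClosure, Finsupp.le_def] using ha
  let T := univ.filter fun j => ∃ g ∈ G, a j < g j
  have hTN : ∀ j ∈ T, a j ≤ N := by
    intro j hj
    obtain ⟨g, hg, hj⟩ := (mem_filter.1 hj).2
    exact hj.le.trans (hN g hg j)
  by_cases hT : T = univ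
  · obtain ⟨i, hi⟩ := exists_orthant_erase_subset_compl_upperClosure hN hsat ha
    refine ⟨univ.erase i, ⟨?_, ?_⟩, fun j _ => hTN j (hT ▸ mem_univ j), hi⟩
    · rw [← card_pos, card_erase_of_mem (mem_univ i), card_univ]
      omega
    · exact fun h => erase_eq_self.1 h (mem_univ i)
  · obtain ⟨g, hg⟩ := hG
    obtain ⟨j, hj⟩ := hlt g hg
    refine ⟨T, ⟨⟨j, mem_filter.2 ⟨mem_univ j, g, hg, hj⟩⟩, hT⟩, hTN, fun b hb hbG => ?_⟩
    obtain ⟨g', hg', hg'b⟩ := mem_upperClosure.1 hbG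
    obtain ⟨k, hk⟩ := hlt g' hg'
    have hbk := hb k (mem_filter.2 ⟨mem_univ k, g', hg', hk⟩)
    exact (hg'b k).not_gt (hbk ▸ hk)

theorem exists_finset_orthant_eq_compl_upperClosure (hι : 1 < Fintype.card ι)
    {G : Finset (ι →₀ ℕ)} (hG : G.Nonempty)
    (hsat : ∀ a ∉ upperClosure (G : Set (ι →₀ ℕ)),
      ∃ i, a + single i 1 ∉ upperClosure (G : Set (ι →₀ ℕ))) :
    ∃ 𝒞 : Finset (Set (ι →₀ ℕ)), (∀ K ∈ 𝒞, ∃ S c, (S.Nonempty ∧ S ≠ univ) ∧ K = orthant S c) ∧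
      (upperClosure (G : Set (ι →₀ ℕ)) : Set (ι →₀ ℕ))ᶜ = ⋃₀ ↑𝒞 :=
  exists_finset_orthant_cover _ _ (G.sup degree) fun _ ha =>
    exists_orthant_subset_compl_upperClosure hι hG
      (fun g hg j => (le_degree j g).trans (le_sup hg)) hsat ha

end Orthant

theorem monomial_one_mem_span_monomial_iff {σ R : Type*} [CommSemiring R] [Nontrivial R]
    {S : Set (σ →₀ ℕ)} {a : σ →₀ ℕ} :
    monomial a (1 : R) ∈ Ideal.span ((fun s => monomial s (1 : R)) '' S) ↔
      a ∈ upperClosure S := by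
  classical
  rw [mem_ideal_span_monomial_image, support_monomial, if_neg one_ne_zero]
  simp [mem_upperClosure]

theorem IsMonomialIdeal.exists_finset_monomial_mem_iff {n : ℕ}
    {I : Ideal (MvPolynomial (Fin n) ℂ)} (hI : IsMonomialIdeal I) (hne : I ≠ ⊥) :
    ∃ G : Finset (Fin n →₀ ℕ), G.Nonempty ∧
      ∀ a, monomial a (1 : ℂ) ∈ I ↔ a ∈ upperClosure (G : Set (Fin n →₀ ℕ)) := by
  obtain ⟨S, rfl⟩ := hI
  obtain ⟨G, hG⟩ := exists_finset_upperClosure_eq S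
  obtain ⟨s, hs⟩ : S.Nonempty := Set.nonempty_iff_ne_empty.2 fun h => hne (by simp [h])
  obtain ⟨g, hg, -⟩ := mem_upperClosure.1 (hG ▸ subset_upperClosure hs)
  exact ⟨G, ⟨g, hg⟩, fun a => hG ▸ monomial_one_mem_span_monomial_iff⟩

theorem IsSaturatedIdeal.exists_monomial_add_single_notMem {n : ℕ}
    {I : Ideal (MvPolynomial (Fin n) ℂ)} (hsat : IsSaturatedIdeal I) {a : Fin n →₀ ℕ}
    (ha : monomial a (1 : ℂ) ∉ I) : ∃ i, monomial (a + single i 1) (1 : ℂ) ∉ I := by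
  by_contra! h
  refine ha (hsat _ ⟨_, isHomogeneous_monomial 1 rfl⟩ fun i => ?_)
  rw [← pow_one (X i), ← monomial_single_add, add_comm]
  exact h i

/-- For `n ≥ 1` and a nonzero saturated monomial ideal `I ⊆ ℂ[x_0,…,x_n]`,
the set of exponent vectors of monomials not in `I` is a finite union of `k`-orthants with
`1 ≤ k ≤ n`. -/
theorem statement8 (n : ℕ) (hn : 1 ≤ n) (I : Ideal (MvPolynomial (Fin (n + 1)) ℂ))
    (hmon : IsMonomialIdeal I) (hsat : IsSaturatedIdeal I) (hne : I ≠ ⊥) :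
    ∃ 𝒞 : Finset (Set (Fin (n + 1) →₀ ℕ)),
      (∀ K ∈ 𝒞, ∃ k : ℕ, 1 ≤ k ∧ k ≤ n ∧ IsOrthant (n + 1) k K) ∧
      {a : Fin (n + 1) →₀ ℕ | monomial a (1 : ℂ) ∉ I}
        = ⋃₀ (𝒞 : Set (Set (Fin (n + 1) →₀ ℕ))) := by
  obtain ⟨G, hG, hmem⟩ := hmon.exists_finset_monomial_mem_iff hne
  have hstep : ∀ a ∉ upperClosure (G : Set (Fin (n + 1) →₀ ℕ)),
      ∃ i, a + single i 1 ∉ upperClosure (G : Set (Fin (n + 1) →₀ ℕ)) := by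
    simpa only [← hmem] using fun a => hsat.exists_monomial_add_single_notMem (a := a)
  have hcard : 1 < Fintype.card (Fin (n + 1)) := by rw [Fintype.card_fin]; omega
  obtain ⟨𝒞, h𝒞, hcover⟩ := exists_finset_orthant_eq_compl_upperClosure hcard hG hstep
  refine ⟨𝒞, fun K hK => ?_, ?_⟩
  · obtain ⟨S, c, ⟨hS, hSuniv⟩, rfl⟩ := h𝒞 K hK
    have hSlt := (card_lt_iff_ne_univ S).2 hSuniv
    rw [Fintype.card_fin] at hSlt
    exact ⟨n + 1 - S.card, by omega, by have := hS.card_pos; omega, isOrthant_orthant S c⟩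
  · rw [← hcover]
    ext a
    exact (hmem a).not
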